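/- arXiv:1908.00461 — 2 statements merged into one kernel-verified Lean document; each statement's English description precedes it below -/
import Mathlib

section
/- Assume σ : ℝ → [−1,1] is differentiable with |σ'| ≤ σ'_max. Let Σ ∈ ℝ^{n×n} be symmetric and set L_Z := sqrt(1 + ‖h(Σ)‖²). For parameters (A,b,C,d) and (Ā,b̄,C̄,d̄) with A, Ā ∈ ℝ^{ℓ×r}, b, b̄ ∈ ℝ^ℓ, C, C̄ ∈ ℝ^{nk×ℓ}, d, d̄ ∈ ℝ^{nk}, set X := C σ̃(A h(Σ)+b) + d and X̄ := C̄ σ̃(Ā h(Σ)+b̄) + d̄. Then for every 1 ≤ ν ≤ nk, (X_ν − X̄_ν)² ≤ ( (‖C_{ν,:}‖ σ'_max L_Z)² + ℓ + 1 ) · ( ‖A − Ā‖_F² + ‖b − b̄‖² + ‖C_{ν,:} − C̄_{ν,:}‖² + (d_ν − d̄_ν)² ). -/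
open scoped BigOperators

/-- Index type for the upper-triangular entries of an `n × n` matrix
(a set of cardinality `n (n + 1) / 2`). -/
abbrev UIdx (n : ℕ) : Type := {p : Fin n × Fin n // p.1 ≤ p.2}

/-- The operator `h` sending a symmetric matrix to the vector of
its upper-triangular entries. -/
def hv {n : ℕ} (S : Matrix (Fin n) (Fin n) ℝ) : UIdx n → ℝ :=
  fun p => S p.1.1 p.1.2

/-- Flattening index: entry `(i, s)` of an `n × k` matrix corresponds to
coordinate `i * k + s` of its row-by-row vectorization (the inverse of `g`). -/
def fidx {n k : ℕ} (i : Fin n) (s : Fin k) : Fin (n * k) :=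
  ⟨i.1 * k + s.1, by
    calc i.1 * k + s.1 < i.1 * k + k := Nat.add_lt_add_left s.2 _
      _ = (i.1 + 1) * k := by ring
      _ ≤ n * k := Nat.mul_le_mul (Nat.succ_le_of_lt i.2) (Nat.le_refl k)⟩

/-- `Z = A h(Σ) + b`. -/
noncomputable def Zv {n ℓ : ℕ} (S : Matrix (Fin n) (Fin n) ℝ)
    (A : Matrix (Fin ℓ) (UIdx n) ℝ) (b : Fin ℓ → ℝ) : Fin ℓ → ℝ :=
  fun i => A.mulVec (hv S) i + b i

/-- `X = C σ̃(Z) + d`. -/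
noncomputable def Xv {n k ℓ : ℕ} (σ : ℝ → ℝ) (S : Matrix (Fin n) (Fin n) ℝ)
    (A : Matrix (Fin ℓ) (UIdx n) ℝ) (b : Fin ℓ → ℝ)
    (C : Matrix (Fin (n * k)) (Fin ℓ) ℝ) (d : Fin (n * k) → ℝ) :
    Fin (n * k) → ℝ :=
  fun ν => C.mulVec (fun i => σ (Zv S A b i)) ν + d ν

/-- `ω i j = [g(X) g(X)ᵀ − Σ]_{i,j}`. -/
noncomputable def omE {n k ℓ : ℕ} (σ : ℝ → ℝ) (S : Matrix (Fin n) (Fin n) ℝ)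
    (A : Matrix (Fin ℓ) (UIdx n) ℝ) (b : Fin ℓ → ℝ)
    (C : Matrix (Fin (n * k)) (Fin ℓ) ℝ) (d : Fin (n * k) → ℝ)
    (i j : Fin n) : ℝ :=
  (∑ s : Fin k, Xv σ S A b C d (fidx i s) * Xv σ S A b C d (fidx j s)) - S i j

/-- The single-layer objective `φ̃(Θ) = Σ_{i,j} μ(ω_{i,j})`. -/
noncomputable def phiT {n k ℓ : ℕ} (σ μ : ℝ → ℝ) (S : Matrix (Fin n) (Fin n) ℝ)
    (A : Matrix (Fin ℓ) (UIdx n) ℝ) (b : Fin ℓ → ℝ)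
    (C : Matrix (Fin (n * k)) (Fin ℓ) ℝ) (d : Fin (n * k) → ℝ) : ℝ :=
  ∑ i : Fin n, ∑ j : Fin n, μ (omE σ S A b C d i j)

/-!
Split `X_ν − X̄_ν = C_ν·(σ̃(Z) − σ̃(Z̄)) + (C_ν − C̄_ν)·σ̃(Z̄) + (d_ν − d̄_ν)`. By Cauchy–Schwarz
and the mean value theorem the first term is controlled by `‖C_ν‖² σ'_max² ‖Z − Z̄‖²`, and
`‖Z − Z̄‖² ≤ (‖A − Ā‖_F² + ‖b − b̄‖²) L_Z²` since `Z − Z̄ = (A − Ā) h(Σ) + (b − b̄)`; the second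
term is at most `ℓ ‖C_ν − C̄_ν‖²` because `|σ| ≤ 1`. The three bounds `tᵢ² ≤ αᵢ uᵢ` combine into
`(∑ tᵢ)² ≤ (∑ αᵢ)(∑ uᵢ)`.
-/

lemma sq_add_le_add_mul_add {t₁ t₂ α₁ α₂ u₁ u₂ : ℝ} (hα₁ : 0 ≤ α₁) (hα₂ : 0 ≤ α₂)
    (hu₁ : 0 ≤ u₁) (hu₂ : 0 ≤ u₂) (h₁ : t₁ ^ 2 ≤ α₁ * u₁) (h₂ : t₂ ^ 2 ≤ α₂ * u₂) :
    (t₁ + t₂) ^ 2 ≤ (α₁ + α₂) * (u₁ + u₂) := by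
  have hcross : (2 * t₁ * t₂) ^ 2 ≤ (α₁ * u₂ + α₂ * u₁) ^ 2 := by
    nlinarith [sq_nonneg (α₁ * u₂ - α₂ * u₁), mul_le_mul h₁ h₂ (sq_nonneg _)
      (mul_nonneg hα₁ hu₁)]
  have := (le_abs_self _).trans ((sq_le_sq.mp hcross).trans_eq
    (abs_of_nonneg (by positivity)))
  nlinarith

lemma sq_sum_mul_add_le {ι : Type*} [Fintype ι] (a x : ι → ℝ) (β : ℝ) :
    (∑ i, a i * x i + β) ^ 2 ≤ (∑ i, a i ^ 2 + β ^ 2) * (∑ i, x i ^ 2 + 1) :=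
  sq_add_le_add_mul_add (by positivity) (sq_nonneg β) (by positivity) zero_le_one
    (Finset.sum_mul_sq_le_sq_mul_sq _ _ _) (mul_one _).ge

lemma sq_sum_mul_le_card_mul {ι : Type*} [Fintype ι] (c g : ι → ℝ) (hg : ∀ i, |g i| ≤ 1) :
    (∑ i, c i * g i) ^ 2 ≤ Fintype.card ι * ∑ i, c i ^ 2 := by
  calc (∑ i, c i * g i) ^ 2 ≤ (∑ i, c i ^ 2) * ∑ i, g i ^ 2 :=
        Finset.sum_mul_sq_le_sq_mul_sq _ _ _
    _ ≤ (∑ i, c i ^ 2) * ∑ _i : ι, 1 := by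
        gcongr with i
        simpa using sq_le_one_iff_abs_le_one (g i) |>.mpr (hg i)
    _ = Fintype.card ι * ∑ i, c i ^ 2 := by simp [mul_comm]

lemma sq_sub_le_of_hasDerivAt_of_abs_le {f f' : ℝ → ℝ} {M : ℝ}
    (hf : ∀ t, HasDerivAt f (f' t) t) (hM : ∀ t, |f' t| ≤ M) (x y : ℝ) :
    (f x - f y) ^ 2 ≤ M ^ 2 * (x - y) ^ 2 := by
  have hlip : |f x - f y| ≤ M * |x - y| := by
    simpa [Real.norm_eq_abs] using Convex.norm_image_sub_le_of_norm_hasDerivWithin_le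
      (fun t _ => (hf t).hasDerivWithinAt) (fun t _ => hM t) convex_univ
      (Set.mem_univ y) (Set.mem_univ x)
  simpa only [mul_pow, sq_abs] using pow_le_pow_left₀ (abs_nonneg _) hlip 2

lemma Zv_sub_Zv {n ℓ : ℕ} (S : Matrix (Fin n) (Fin n) ℝ) (A A' : Matrix (Fin ℓ) (UIdx n) ℝ)
    (b b' : Fin ℓ → ℝ) (i : Fin ℓ) :
    Zv S A b i - Zv S A' b' i = ∑ p, (A i p - A' i p) * hv S p + (b i - b' i) := by
  simp only [Zv, Matrix.mulVec, dotProduct, sub_mul, Finset.sum_sub_distrib]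
  ring

lemma Xv_sub_Xv {n k ℓ : ℕ} (σ : ℝ → ℝ) (S : Matrix (Fin n) (Fin n) ℝ)
    (A A' : Matrix (Fin ℓ) (UIdx n) ℝ) (b b' : Fin ℓ → ℝ)
    (C C' : Matrix (Fin (n * k)) (Fin ℓ) ℝ) (d d' : Fin (n * k) → ℝ) (ν : Fin (n * k)) :
    Xv σ S A b C d ν - Xv σ S A' b' C' d' ν =
      ∑ i, C ν i * (σ (Zv S A b i) - σ (Zv S A' b' i)) +
        ∑ i, (C ν i - C' ν i) * σ (Zv S A' b' i) + (d ν - d' ν) := by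
  simp only [Xv, Matrix.mulVec, dotProduct, mul_sub, sub_mul, Finset.sum_sub_distrib]
  ring

lemma sum_sq_sub_le_of_hasDerivAt {n ℓ : ℕ} {σ σ' : ℝ → ℝ} {M : ℝ}
    (hσ : ∀ t, HasDerivAt σ (σ' t) t) (hM : ∀ t, |σ' t| ≤ M) (S : Matrix (Fin n) (Fin n) ℝ)
    (A A' : Matrix (Fin ℓ) (UIdx n) ℝ) (b b' : Fin ℓ → ℝ) :
    ∑ i, (σ (Zv S A b i) - σ (Zv S A' b' i)) ^ 2 ≤
      M ^ 2 * (1 + ∑ p, hv S p ^ 2) *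
        ((∑ i, ∑ p, (A i p - A' i p) ^ 2) + ∑ i, (b i - b' i) ^ 2) := by
  rw [← Finset.sum_add_distrib, Finset.mul_sum]
  gcongr with i
  calc (σ (Zv S A b i) - σ (Zv S A' b' i)) ^ 2
      ≤ M ^ 2 * (Zv S A b i - Zv S A' b' i) ^ 2 := sq_sub_le_of_hasDerivAt_of_abs_le hσ hM _ _
    _ ≤ M ^ 2 * ((∑ p, (A i p - A' i p) ^ 2 + (b i - b' i) ^ 2) * (∑ p, hv S p ^ 2 + 1)) := by
        rw [Zv_sub_Zv]; gcongr; exact sq_sum_mul_add_le _ _ _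
    _ = _ := by ring

theorem stmt_13_general {n k ℓ : ℕ}
    (σ σ' : ℝ → ℝ) (σ'max : ℝ)
    (hσd : ∀ t, HasDerivAt σ (σ' t) t)
    (hσr : ∀ t, σ t ∈ Set.Icc (-1 : ℝ) 1)
    (hσ'b : ∀ t, |σ' t| ≤ σ'max)
    (S : Matrix (Fin n) (Fin n) ℝ)
    (A Abar : Matrix (Fin ℓ) (UIdx n) ℝ) (b bbar : Fin ℓ → ℝ)
    (C Cbar : Matrix (Fin (n * k)) (Fin ℓ) ℝ) (d dbar : Fin (n * k) → ℝ)
    (ν : Fin (n * k)) :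
    (Xv σ S A b C d ν - Xv σ S Abar bbar Cbar dbar ν) ^ 2 ≤
      ((Real.sqrt (∑ ι, C ν ι ^ 2) * σ'max *
          Real.sqrt (1 + ∑ p : UIdx n, hv S p ^ 2)) ^ 2 + (ℓ : ℝ) + 1) *
        ((∑ ι, ∑ η, (A ι η - Abar ι η) ^ 2) + (∑ ι, (b ι - bbar ι) ^ 2) +
          (∑ ι, (C ν ι - Cbar ν ι) ^ 2) + (d ν - dbar ν) ^ 2) := by
  set K := σ'max ^ 2 * (1 + ∑ p : UIdx n, hv S p ^ 2)
  set E := (∑ ι, ∑ η, (A ι η - Abar ι η) ^ 2) + ∑ ι, (b ι - bbar ι) ^ 2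
  have hL : (Real.sqrt (∑ ι, C ν ι ^ 2) * σ'max * Real.sqrt (1 + ∑ p : UIdx n, hv S p ^ 2)) ^ 2
      = (∑ ι, C ν ι ^ 2) * K := by
    rw [mul_pow, mul_pow, Real.sq_sqrt (by positivity), Real.sq_sqrt (by positivity)]; ring
  have hfirst : (∑ i, C ν i * (σ (Zv S A b i) - σ (Zv S Abar bbar i))) ^ 2 ≤
      (∑ i, C ν i ^ 2) * K * E := by
    rw [mul_assoc]
    exact (Finset.sum_mul_sq_le_sq_mul_sq _ _ _).trans <| mul_le_mul_of_nonneg_left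
      (sum_sq_sub_le_of_hasDerivAt hσd hσ'b S A Abar b bbar) (by positivity)
  have hsecond : (∑ i, (C ν i - Cbar ν i) * σ (Zv S Abar bbar i)) ^ 2 ≤
      ℓ * ∑ i, (C ν i - Cbar ν i) ^ 2 := by
    simpa using sq_sum_mul_le_card_mul (fun i => C ν i - Cbar ν i) _
      fun i => abs_le.mpr (hσr (Zv S Abar bbar i))
  rw [Xv_sub_Xv, hL]
  exact sq_add_le_add_mul_add (by positivity) zero_le_one (by positivity) (sq_nonneg _)
    (sq_add_le_add_mul_add (by positivity) (by positivity) (by positivity) (by positivity)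
      hfirst hsecond) (one_mul _).ge

theorem stmt_13 {n k ℓ : ℕ}
    (σ σ' : ℝ → ℝ) (σ'max : ℝ)
    (hσd : ∀ t, HasDerivAt σ (σ' t) t)
    (hσr : ∀ t, σ t ∈ Set.Icc (-1 : ℝ) 1)
    (hσ'b : ∀ t, |σ' t| ≤ σ'max)
    (S : Matrix (Fin n) (Fin n) ℝ) (hS : S.IsSymm)
    (A Abar : Matrix (Fin ℓ) (UIdx n) ℝ) (b bbar : Fin ℓ → ℝ)
    (C Cbar : Matrix (Fin (n * k)) (Fin ℓ) ℝ) (d dbar : Fin (n * k) → ℝ)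
    (ν : Fin (n * k)) :
    (Xv σ S A b C d ν - Xv σ S Abar bbar Cbar dbar ν) ^ 2 ≤
      ((Real.sqrt (∑ ι, C ν ι ^ 2) * σ'max *
          Real.sqrt (1 + ∑ p : UIdx n, hv S p ^ 2)) ^ 2 + (ℓ : ℝ) + 1) *
        ((∑ ι, ∑ η, (A ι η - Abar ι η) ^ 2) + (∑ ι, (b ι - bbar ι) ^ 2) +
          (∑ ι, (C ν ι - Cbar ν ι) ^ 2) + (d ν - dbar ν) ^ 2) :=
  stmt_13_general σ σ' σ'max hσd hσr hσ'b S A Abar b bbar C Cbar d dbar ν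
end

section
/- Assume σ : ℝ → [−1,1] (bounded in absolute value by 1). Let Σ ∈ ℝ^{n×n} be symmetric, A ∈ ℝ^{ℓ×r}, b ∈ ℝ^ℓ, C ∈ ℝ^{nk×ℓ}, d ∈ ℝ^{nk}, and set X := C σ̃(A h(Σ)+b) + d ∈ ℝ^{nk}. For 1 ≤ i, j ≤ n and 1 ≤ ι ≤ ℓ define V_{i,j,ι} := Σ_{s=1}^k C_{(i−1)k+s, ι} X_{(j−1)k+s}. Then V_{i,j,ι}² ≤ ‖g(C_{:,ι})_{i,:}‖² · (ℓ + 1) · ( Σ_{ȷ=1}^ℓ ‖g(C_{:,ȷ})_{j,:}‖² + ‖g(d)_{j,:}‖² ). -/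
open scoped BigOperators

/-! Cauchy–Schwarz in `s` bounds `V²` by `‖g(C_{:,ι})_{i,:}‖² · Σ_s X_{j,s}²`; each
`X_{j,s} = Σ_ȷ C_{j,s,ȷ} σ(Z_ȷ) + d_{j,s}` is a sum of `ℓ + 1` terms, so Cauchy–Schwarz against the
all-ones vector together with `|σ| ≤ 1` gives `X_{j,s}² ≤ (ℓ + 1)(Σ_ȷ C_{j,s,ȷ}² + d_{j,s}²)`. -/

theorem sq_sum_add_le_card_succ_mul {ι : Type*} [Fintype ι] (x : ι → ℝ) (e : ℝ) :
    (∑ t, x t + e) ^ 2 ≤ (Fintype.card ι + 1) * (∑ t, x t ^ 2 + e ^ 2) := by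
  have h := sq_sum_le_card_mul_sum_sq (s := Finset.univ) (f := fun t : Option ι => t.elim e x)
  simpa [Fintype.sum_option, add_comm] using h

theorem sq_sum_mul_add_le_of_abs_le_one {ι : Type*} [Fintype ι] (c w : ι → ℝ) (e : ℝ)
    (hw : ∀ t, |w t| ≤ 1) :
    (∑ t, c t * w t + e) ^ 2 ≤ (Fintype.card ι + 1) * (∑ t, c t ^ 2 + e ^ 2) := by
  have hcw : ∀ t, (c t * w t) ^ 2 ≤ c t ^ 2 := fun t => by
    rw [mul_pow]
    exact mul_le_of_le_one_right (sq_nonneg _) ((sq_le_one_iff_abs_le_one _).mpr (hw t))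
  calc (∑ t, c t * w t + e) ^ 2
      ≤ (Fintype.card ι + 1) * (∑ t, (c t * w t) ^ 2 + e ^ 2) :=
        sq_sum_add_le_card_succ_mul _ e
    _ ≤ (Fintype.card ι + 1) * (∑ t, c t ^ 2 + e ^ 2) := by
        gcongr ?_ * (?_ + _)
        exact Finset.sum_le_sum fun t _ => hcw t

theorem stmt_15_general {n k ℓ : ℕ}
    (σ : ℝ → ℝ) (hσr : ∀ t, σ t ∈ Set.Icc (-1 : ℝ) 1)
    (S : Matrix (Fin n) (Fin n) ℝ)
    (A : Matrix (Fin ℓ) (UIdx n) ℝ) (b : Fin ℓ → ℝ)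
    (C : Matrix (Fin (n * k)) (Fin ℓ) ℝ) (d : Fin (n * k) → ℝ)
    (i j : Fin n) (ι : Fin ℓ) :
    (∑ s : Fin k, C (fidx i s) ι * Xv σ S A b C d (fidx j s)) ^ 2 ≤
      (∑ s : Fin k, C (fidx i s) ι ^ 2) * ((ℓ : ℝ) + 1) *
        ((∑ jj : Fin ℓ, ∑ s : Fin k, C (fidx j s) jj ^ 2) +
          ∑ s : Fin k, d (fidx j s) ^ 2) := by
  have hX : ∀ s, Xv σ S A b C d (fidx j s) ^ 2 ≤
      ((ℓ : ℝ) + 1) * (∑ jj, C (fidx j s) jj ^ 2 + d (fidx j s) ^ 2) := fun s => by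
    simpa [Xv, Matrix.mulVec, dotProduct] using
      sq_sum_mul_add_le_of_abs_le_one (C (fidx j s)) (fun jj => σ (Zv S A b jj)) (d (fidx j s))
        (fun jj => abs_le.mpr (hσr _))
  calc (∑ s : Fin k, C (fidx i s) ι * Xv σ S A b C d (fidx j s)) ^ 2
      ≤ (∑ s : Fin k, C (fidx i s) ι ^ 2) * ∑ s : Fin k, Xv σ S A b C d (fidx j s) ^ 2 :=
        Finset.sum_mul_sq_le_sq_mul_sq _ _ _
    _ ≤ (∑ s : Fin k, C (fidx i s) ι ^ 2) *
          ∑ s : Fin k, ((ℓ : ℝ) + 1) * (∑ jj, C (fidx j s) jj ^ 2 + d (fidx j s) ^ 2) := by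
        gcongr with s
        exact hX s
    _ = _ := by
        rw [← Finset.mul_sum, Finset.sum_add_distrib, Finset.sum_comm, mul_assoc]

theorem stmt_15 {n k ℓ : ℕ}
    (σ : ℝ → ℝ) (hσr : ∀ t, σ t ∈ Set.Icc (-1 : ℝ) 1)
    (S : Matrix (Fin n) (Fin n) ℝ) (hS : S.IsSymm)
    (A : Matrix (Fin ℓ) (UIdx n) ℝ) (b : Fin ℓ → ℝ)
    (C : Matrix (Fin (n * k)) (Fin ℓ) ℝ) (d : Fin (n * k) → ℝ)
    (i j : Fin n) (ι : Fin ℓ) :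
    (∑ s : Fin k, C (fidx i s) ι * Xv σ S A b C d (fidx j s)) ^ 2 ≤
      (∑ s : Fin k, C (fidx i s) ι ^ 2) * ((ℓ : ℝ) + 1) *
        ((∑ jj : Fin ℓ, ∑ s : Fin k, C (fidx j s) jj ^ 2) +
          ∑ s : Fin k, d (fidx j s) ^ 2) :=
  stmt_15_general σ hσr S A b C d i j ι
end
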